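/- Let d ≥ 2 and let n ∈ {0,1,…,d−2}. Every sequence of 2^n consecutive edges of a well-folded hyperorthogonal curve on the grid in ℤ^d lies inside an (n+1)-dimensional unit cube, i.e., inside an axis-aligned box whose side has length 1 in exactly n+1 coordinates and length 0 in the remaining d−n−1 coordinates. -/

import Mathlib

open MeasureTheory

/-! ## Basic objects: points of `ℤ^d` (indexed by coordinates `1,…,d`), directions,
Gray codes, curves on the grid, inflation, well-foldedness, hyperorthogonality. -/

/-- A point of the grid `ℤ^d`; only coordinates `1,…,d` are meaningful
(coordinate `0` and coordinates `> d` are kept equal to `0`). -/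
abbrev Pt : Type := ℕ → ℤ

def ptZero : Pt := fun _ => 0

/-- `flipped i = 1` if `i < 0`, and `0` otherwise. -/
def flipped (i : ℤ) : ℤ := if i < 0 then 1 else 0

/-- Reversal of a free curve (sequence of directions): reverse the order and
negate every direction. -/
def grayRev (l : List ℤ) : List ℤ := (l.map (fun x => -x)).reverse

/-- The Gray-code free curve `G(d)`: `G(0)` is empty and `G(d)` is the
concatenation of `G(d-1)`, the single direction `d`, and the reverse of `G(d-1)`. -/
def G : ℕ → List ℤ
  | 0 => []
  | d + 1 => G d ++ [((d : ℤ) + 1)] ++ grayRev (G d)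

/-- Moving a point one step in direction `e`: coordinate `|e|` changes by `sgn e`. -/
def move (v : Pt) (e : ℤ) : Pt := fun j => if j = e.natAbs then v j + e.sign else v j

/-- The vertices of the path starting at `start` whose successive edge
directions are given by `dirs`. -/
def pathVertices (start : Pt) (dirs : List ℤ) : List Pt := dirs.scanl move start

/-- `e` is a valid direction in `d` dimensions: `e ∈ {−d,…,−1,1,…,d}`. -/
def IsDir (d : ℕ) (e : ℤ) : Prop := e ≠ 0 ∧ e.natAbs ≤ d

/-- The (ordered) pair `(v,w)` is an edge with direction `e`. -/
def HasDir (d : ℕ) (v w : Pt) (e : ℤ) : Prop := IsDir d e ∧ w = move v e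

/-- `(v,w)` is an edge of the grid. -/
def IsEdge (d : ℕ) (v w : Pt) : Prop := ∃ e, HasDir d v w e

/-- A curve on the grid: a finite sequence of distinct points in which each pair of
consecutive points differs by `±1` in exactly one coordinate. -/
def IsGridCurve (d : ℕ) (c : List Pt) : Prop := c.Nodup ∧ c.Chain' (IsEdge d)

/-- Membership in the cube `{0,…,2^k−1}^d` (unused coordinates are `0`). -/
def InCube (d k : ℕ) (v : Pt) : Prop :=
  (∀ j, 1 ≤ j → j ≤ d → 0 ≤ v j ∧ v j < 2 ^ k) ∧ (∀ j, j = 0 ∨ d < j → v j = 0)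

/-- A `k`-curve: a Hamiltonian path on the grid `{0,…,2^k−1}^d`. -/
def IsKCurve (d k : ℕ) (c : List Pt) : Prop :=
  IsGridCurve d c ∧ ∀ v : Pt, v ∈ c ↔ InCube d k v

/-- A signed permutation of `{−d,…,−1,1,…,d}`: a bijection `σ` of this set
with `σ(−k) = −σ(k)` (bundled with its inverse). -/
structure SignedPerm (d : ℕ) where
  f : ℤ → ℤ
  inv : ℤ → ℤ
  maps : ∀ i : ℤ, IsDir d i → IsDir d (f i)
  maps_inv : ∀ i : ℤ, IsDir d i → IsDir d (inv i)
  neg : ∀ i : ℤ, f (-i) = -f i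
  neg_inv : ∀ i : ℤ, inv (-i) = -inv i
  left_inv : ∀ i : ℤ, IsDir d i → inv (f i) = i
  right_inv : ∀ i : ℤ, IsDir d i → f (inv i) = i

/-- The 1-curve `σ(G(d))` (an isometric image of the Gray-code curve) placed in the
cube `2·v + {0,1}^d`; its entry corner is forced to be
`2·v + (flipped(σ⁻¹(1)),…,flipped(σ⁻¹(d)))`. -/
def grayPiece (d : ℕ) (σ : SignedPerm d) (v : Pt) : List Pt :=
  pathVertices (fun j => 2 * v j + if 1 ≤ j ∧ j ≤ d then flipped (σ.inv (j : ℤ)) else 0)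
    ((G d).map σ.f)

/-- `B` is obtained from `A` by (well-folded) inflation: each vertex of `A` is
replaced by an isometric image of `G(d)` in the corresponding subcube, and the
result is a valid curve on the grid. (Reversed images of `G(d)` are themselves
images of `G(d)` under another signed permutation, so no generality is lost.) -/
def IsInflationWF (d : ℕ) (A B : List Pt) : Prop :=
  ∃ σ : ℕ → SignedPerm d,
    B = ((List.range A.length).map (fun i => grayPiece d (σ i) (A.getD i ptZero))).flatten ∧
    IsGridCurve d B

/-- A curve is well-folded if it is a single vertex or is obtained by inflation from a
well-folded curve, every inserted 1-curve being an isometric image of `G(d)`. -/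
inductive WellFolded (d : ℕ) : List Pt → Prop
  | single (v : Pt) : WellFolded d [v]
  | inflate {A B : List Pt} : WellFolded d A → IsInflationWF d A B → WellFolded d B

/-- The set of axes in which `v` and `w` differ (for a grid edge this is the
singleton of its axis). -/
def axesOfEdge (d : ℕ) (v w : Pt) : Finset ℕ :=
  (Finset.range (d + 1)).filter (fun j => v j ≠ w j)

/-- Hyperorthogonality: for every `n ∈ {0,…,d−2}`, every `2^n` consecutive
edges of the curve have exactly `n+1` distinct axes. -/
def Hyperorthogonal (d : ℕ) (c : List Pt) : Prop :=
  ∀ n, n ≤ d - 2 → ∀ s, s + 2 ^ n + 1 ≤ c.length →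
    ((Finset.range (2 ^ n)).biUnion
      (fun t => axesOfEdge d (c.getD (s + t) ptZero) (c.getD (s + t + 1) ptZero))).card = n + 1

/-- The depth of a direction `a` in a signed permutation `σ`:
`0` if `|a| ∈ {|σ(d)|,|σ(d−1)|}`, and otherwise the number `j` with `|σ(d−1−j)| = |a|`. -/
def depth (d : ℕ) (σ : SignedPerm d) (a : ℤ) : ℕ :=
  if (σ.inv a).natAbs = d ∨ (σ.inv a).natAbs = d - 1 then 0 else d - 1 - (σ.inv a).natAbs

/-- The (signed) direction of the edge from `v` to `w`
(for a grid edge with axis `j` this is `±j`). -/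
def dirOf (d : ℕ) (v w : Pt) : ℤ :=
  ∑ j ∈ (Finset.range (d + 1)).filter (fun j => v j ≠ w j), (j : ℤ) * (w j - v j)

/-- The axis of the edge from `v` to `w`. -/
def axisOf (d : ℕ) (v w : Pt) : ℕ := (dirOf d v w).natAbs

/-! ## Extended curves -/

/-- For the extended curve with entry-edge direction `en`, vertex list `c` and
exit-edge direction `ex`, the axis of its `t`-th edge, where the entry edge has
index `0`, the internal edges have indices `1,…,c.length − 1` (edge `t` joins
`c[t−1]` and `c[t]`) and the exit edge has index `c.length`. -/
def axE (d : ℕ) (en : ℤ) (c : List Pt) (ex : ℤ) (t : ℕ) : ℕ :=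
  if t = 0 then en.natAbs
  else if t = c.length then ex.natAbs
  else axisOf d (c.getD (t - 1) ptZero) (c.getD t ptZero)

/-- The edge distance of the axis `a` to the vertex with index `p` within the
extended curve `(en, c, ex)`: one less than the number of edges of the smallest
contiguous subcurve containing this vertex and an edge with axis `a`. -/
noncomputable def edgedistE (d : ℕ) (en : ℤ) (c : List Pt) (ex : ℤ) (p a : ℕ) : ℕ :=
  sInf {m | ∃ t, t ≤ c.length ∧ axE d en c ex t = a ∧
    m = if t ≤ p then p - t else t - p - 1}

/-- Hyperorthogonality of an extended curve: every `2^n` consecutive edges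
(including the entry and exit edges) have exactly `n+1` distinct axes, for all
`n ∈ {0,…,d−2}`. -/
def HyperorthogonalE (d : ℕ) (en : ℤ) (c : List Pt) (ex : ℤ) : Prop :=
  ∀ n, n ≤ d - 2 → ∀ s, s + 2 ^ n ≤ c.length + 1 →
    ((Finset.range (2 ^ n)).image (fun t => axE d en c ex (s + t))).card = n + 1

/-- The sequence of approximating curves determined by a system of signed
permutations `σ k i` (one for each vertex `i` of the `k`-th curve):
`A_0` is the single vertex at the origin and `A_{k+1}` is obtained from `A_k` by
inflation, vertex `i` being replaced by the 1-curve `σ_{k,i}(G(d))`. -/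
def buildCurve (d : ℕ) (σ : ℕ → ℕ → SignedPerm d) : ℕ → List Pt
  | 0 => [ptZero]
  | k + 1 =>
    ((List.range (buildCurve d σ k).length).map
      (fun i => grayPiece d (σ k i) ((buildCurve d σ k).getD i ptZero))).flatten

/-- `f : [0,1] → [0,1]^d` is the space-filling curve approximated by the curves
`A k`: the `i`-th vertex of `A k` corresponds to the cube `2^{−k}(v_{k,i} + [0,1]^d)`,
and `f` maps `[i/2^{dk},(i+1)/2^{dk}]` into that cube. -/
def Approximates (d : ℕ) (A : ℕ → List Pt) (f : ℝ → Fin d → ℝ) : Prop :=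
  ∀ k i, i < (A k).length → ∀ t : ℝ,
    (i : ℝ) / 2 ^ (d * k) ≤ t → t ≤ ((i : ℝ) + 1) / 2 ^ (d * k) →
    ∀ j : Fin d,
      ((((A k).getD i ptZero) ((j : ℕ) + 1) : ℝ) / 2 ^ k ≤ f t j ∧
        f t j ≤ ((((A k).getD i ptZero) ((j : ℕ) + 1) : ℝ) + 1) / 2 ^ k)

/-- The smallest axis-aligned box containing a (nonempty, bounded) set `S ⊆ ℝ^d`. -/
noncomputable def bbox (d : ℕ) (S : Set (Fin d → ℝ)) : Set (Fin d → ℝ) :=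
  Set.univ.pi fun j => Set.Icc (sInf ((fun p => p j) '' S)) (sSup ((fun p => p j) '' S))

/-! ## General inflation (arbitrary 1-curves), isometric copies, self-similarity -/

/-- `c` is a 1-curve on the translated unit cube `2·base + {0,1}^d`. -/
def IsUnitCurveAt (d : ℕ) (base : Pt) (c : List Pt) : Prop :=
  IsGridCurve d c ∧
    ∀ v : Pt, v ∈ c ↔
      ((∀ j, 1 ≤ j → j ≤ d → v j = 2 * base j ∨ v j = 2 * base j + 1) ∧
        ∀ j, j = 0 ∨ d < j → v j = 2 * base j)

/-- `B` is obtained from `A` by (general) inflation: each vertex `v_i` of `A` is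
replaced by a 1-curve on `2·v_i + {0,1}^d`, and each edge of `A` with direction `e_i`
is replaced by an edge of the same direction connecting consecutive 1-curves. -/
def IsInflation (d : ℕ) (A B : List Pt) : Prop :=
  ∃ C : ℕ → List Pt,
    B = ((List.range A.length).map C).flatten ∧
    IsGridCurve d B ∧
    (∀ i, i < A.length → IsUnitCurveAt d (A.getD i ptZero) (C i)) ∧
    (∀ i, i + 1 < A.length → ∀ e : ℤ,
      HasDir d (A.getD i ptZero) (A.getD (i + 1) ptZero) e →
      HasDir d ((C i).getLastD ptZero) ((C (i + 1)).headD ptZero) e)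

/-- `InflationChain d k X`: `X` is constructed from a single vertex by `k` steps
of inflation. -/
inductive InflationChain (d : ℕ) : ℕ → List Pt → Prop
  | base (v : Pt) : InflationChain d 0 [v]
  | step {k : ℕ} {A B : List Pt} :
      InflationChain d k A → IsInflation d A B → InflationChain d (k + 1) B

/-- The hyperoctahedral symmetry of the cube `{0,…,M}^d` given by the signed
permutation `σ`: the coordinate `|σ⁻¹(j)|` of the argument is sent to coordinate `j`,
reflected (`x ↦ M − x`) whenever `σ⁻¹(j) < 0`. -/
def applySP (d : ℕ) (M : ℤ) (σ : SignedPerm d) (x : Pt) : Pt :=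
  fun j =>
    if 1 ≤ j ∧ j ≤ d then
      if 0 ≤ σ.inv (j : ℤ) then x (σ.inv (j : ℤ)).natAbs
      else M - x (σ.inv (j : ℤ)).natAbs
    else x j

/-- `B` is an isometric copy of the curve `A` (living in a cube `{0,…,M}^d`):
a hyperoctahedral symmetry, possibly composed with reversal, followed by a translation. -/
def IsometricCopy (d : ℕ) (M : ℤ) (A B : List Pt) : Prop :=
  ∃ σ : SignedPerm d, ∃ rev : Bool, ∃ tr : Pt,
    B = (if rev then A.reverse else A).map (fun v => fun j => applySP d M σ v j + tr j)

/-- Self-similarity of one approximation step: `B` is the concatenation of `2^d`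
isometric copies of the `k`-curve `A`, connected by single edges. -/
def SelfSimilarStep (d k : ℕ) (A B : List Pt) : Prop :=
  ∃ parts : ℕ → List Pt,
    B = ((List.range (2 ^ d)).map parts).flatten ∧
    IsGridCurve d B ∧
    ∀ m, m < 2 ^ d → IsometricCopy d ((2 : ℤ) ^ k - 1) A (parts m)

/-- Coordinate `a ∈ {1,…,d}` of a point of `ℝ^d`. -/
noncomputable def coordR (d : ℕ) (x : Fin d → ℝ) (a : ℕ) : ℝ :=
  if h : a - 1 < d then x ⟨a - 1, h⟩ else 0

/-- The hyperoctahedral symmetry of the unit cube `[0,1]^d` given by the signed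
permutation `σ`. -/
noncomputable def applySPR (d : ℕ) (σ : SignedPerm d) (x : Fin d → ℝ) : Fin d → ℝ :=
  fun j =>
    if 0 ≤ σ.inv ((j : ℕ) + 1 : ℤ) then coordR d x (σ.inv ((j : ℕ) + 1 : ℤ)).natAbs
    else 1 - coordR d x (σ.inv ((j : ℕ) + 1 : ℤ)).natAbs

/-- `f` is a self-similar hyperorthogonal well-folded space-filling curve:
it is approximated by a sequence of `k`-curves, starting from a single vertex,
in which each curve is obtained from the previous one by well-folded inflation,
all approximating curves are hyperorthogonal, and each approximating curve is the
concatenation of `2^d` isometric copies of the previous one. -/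
def SSHOWFcurve (d : ℕ) (f : ℝ → Fin d → ℝ) : Prop :=
  ∃ A : ℕ → List Pt,
    A 0 = [ptZero] ∧
    (∀ k, IsInflationWF d (A k) (A (k + 1))) ∧
    (∀ k, IsKCurve d k (A k)) ∧
    (∀ k, Hyperorthogonal d (A k)) ∧
    (∀ k, SelfSimilarStep d k (A k) (A (k + 1))) ∧
    Approximates d A f

/-- Two space-filling curves are the same up to hyperoctahedral symmetry and
reversal. -/
def curveEquiv (d : ℕ) (f g : ℝ → Fin d → ℝ) : Prop :=
  ∃ τ : SignedPerm d,
    (∀ t ∈ Set.Icc (0 : ℝ) 1, g t = applySPR d τ (f t)) ∨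
    (∀ t ∈ Set.Icc (0 : ℝ) 1, g t = applySPR d τ (f (1 - t)))

/-- The direction of the entry edge of the extended child curve `C'_m` within the
inflation of the extended curve `(e0, A, e1)`. -/
def childEntryDir (d : ℕ) (A : List Pt) (e0 : ℤ) (m : ℕ) : ℤ :=
  if m = 0 then e0 else dirOf d (A.getD (m - 1) ptZero) (A.getD m ptZero)

/-- The direction of the exit edge of the extended child curve `C'_m` within the
inflation of the extended curve `(e0, A, e1)`. -/
def childExitDir (d : ℕ) (A : List Pt) (e1 : ℤ) (m : ℕ) : ℤ :=
  if m + 1 = A.length then e1 else dirOf d (A.getD m ptZero) (A.getD (m + 1) ptZero)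

/-- The local edge distance of the axis `a` to the vertex with index `i` within the
extended approximating curve `A'_k` (entry direction `e0`, exit direction `e1`)
of the system `σ`: the edge distance within the extended child curve of `A'_{k-1}`
containing this vertex. -/
noncomputable def led (d : ℕ) (σ : ℕ → ℕ → SignedPerm d) (e0 e1 : ℤ) :
    ℕ → ℕ → ℕ → ℕ
  | 0, _, a => edgedistE d e0 (buildCurve d σ 0) e1 0 a
  | k + 1, i, a =>
    edgedistE d (childEntryDir d (buildCurve d σ k) e0 (i / 2 ^ d))
      (grayPiece d (σ k (i / 2 ^ d)) ((buildCurve d σ k).getD (i / 2 ^ d) ptZero))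
      (childExitDir d (buildCurve d σ k) e1 (i / 2 ^ d))
      (i % 2 ^ d) a

/-- The system of permutations `σ` describes a sequence of extended hyperorthogonal
well-folded approximating curves with entry direction `e0` and exit direction `e1`,
in which the signs of `σ_{k,1}⁻¹` are prescribed by `s`, and the elements of every
unsigned permutation `|σ_{k,i}|` are sorted by decreasing local edge distance. -/
def GoodSystem (d : ℕ) (e0 e1 : ℤ) (s : ℕ → ℕ → ℤ) (σ : ℕ → ℕ → SignedPerm d) : Prop :=
  (∀ k, IsKCurve d k (buildCurve d σ k)) ∧
  (∀ k, HyperorthogonalE d e0 (buildCurve d σ k) e1) ∧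
  (∀ k, ¬ InCube d k (move ((buildCurve d σ k).headD ptZero) (-e0))) ∧
  (∀ k, ¬ InCube d k (move ((buildCurve d σ k).getLastD ptZero) e1)) ∧
  (∀ k j, 1 ≤ j → j ≤ d → Int.sign ((σ k 0).inv (j : ℤ)) = s k j) ∧
  (∀ k i, i < (buildCurve d σ k).length →
    ∀ p q : ℕ, 1 ≤ p → p ≤ q → q ≤ d →
      led d σ e0 e1 k i (((σ k i).f (q : ℤ)).natAbs) ≤
        led d σ e0 e1 k i (((σ k i).f (p : ℤ)).natAbs))

/-- The Butz-Moore generalization of the Hilbert curve, described by the conditions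
on its system of signed permutations: `|σ_{k,i}(d)| = 1` for the first and last
subcube, `|σ_{k,i}(d)| = max(|e_{k,i−1}|,|e_{k,i}|)` in between, all unsigned
permutations are cyclic rotations, and the entry is at the origin. -/
def ButzMoore (d : ℕ) (σ : ℕ → ℕ → SignedPerm d) : Prop :=
  (∀ k, IsKCurve d k (buildCurve d σ k)) ∧
  (∀ k i, i < 2 ^ (d * k) → (i = 0 ∨ i = 2 ^ (d * k) - 1) →
    ((σ k i).f (d : ℤ)).natAbs = 1) ∧
  (∀ k i, 0 < i → i + 1 < 2 ^ (d * k) →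
    ((σ k i).f (d : ℤ)).natAbs =
      max (dirOf d ((buildCurve d σ k).getD (i - 1) ptZero)
            ((buildCurve d σ k).getD i ptZero)).natAbs
          (dirOf d ((buildCurve d σ k).getD i ptZero)
            ((buildCurve d σ k).getD (i + 1) ptZero)).natAbs) ∧
  (∀ k i j, 1 ≤ j → j ≤ d →
    ((σ k i).f (j : ℤ)).natAbs = ((((σ k i).f (d : ℤ)).natAbs + j - 1) % d) + 1) ∧
  (∀ k j, 1 ≤ j → j ≤ d → 0 ≤ (σ k 0).inv (j : ℤ))

/-! ## Generalized curves (diagonal edges allowed) -/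

/-- A generalized edge: `w ≠ v` and every coordinate changes by at most 1. -/
def IsGenEdge (d : ℕ) (v w : Pt) : Prop :=
  v ≠ w ∧ (∀ j, 1 ≤ j → j ≤ d → |w j - v j| ≤ 1) ∧ ∀ j, j = 0 ∨ d < j → w j = v j

/-- A generalized curve on the grid (diagonal edges allowed). -/
def IsGenCurve (d : ℕ) (c : List Pt) : Prop := c.Nodup ∧ c.Chain' (IsGenEdge d)

/-- Generalized inflation: vertices are replaced by 1-curves on the corresponding
subcubes, consecutive 1-curves being joined by a single (possibly diagonal) edge. -/
def IsGenInflation (d : ℕ) (A B : List Pt) : Prop :=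
  ∃ C : ℕ → List Pt,
    B = ((List.range A.length).map C).flatten ∧
    IsGenCurve d B ∧
    (∀ i, i < A.length → IsUnitCurveAt d (A.getD i ptZero) (C i))

/-!
A well-folded curve with at least two vertices is an inflation: its consecutive blocks of `2^d`
vertices are copies `σ(G(d))` filling the unit cubes `2·v + {0,1}^d`. Take `S` to be the set of
axes of the `2^n` edges of the window; hyperorthogonality says `|S| = n + 1`, and the coordinates
outside `S` are constant on the window. Since `2^n ≤ 2^d`, the window meets at most two blocks.
Inside one block every coordinate takes two adjacent values. If the window crosses the edge `e`
joining two blocks, the parts of the window on either side of `e` are runs of fewer than `2^n`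
edges at the end or at the start of a copy of `G(d)`, so they use only `n` axes; hyperorthogonality
then forbids them to use the axis of `e`. Hence that coordinate is constant on each side and jumps
by one across `e`, while every other coordinate stays in the unit cube common to both blocks.
-/

lemma isDir_iff {d : ℕ} {e : ℤ} : IsDir d e ↔ e.natAbs ∈ Finset.Icc 1 d := by
  simp only [IsDir, Finset.mem_Icc]
  omega

lemma length_grayRev (l : List ℤ) : (grayRev l).length = l.length := by
  simp [grayRev]

lemma mem_grayRev {l : List ℤ} {e : ℤ} : e ∈ grayRev l ↔ -e ∈ l := by
  simp [grayRev, neg_eq_iff_eq_neg]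

lemma map_grayRev {f : ℤ → ℤ} (hf : ∀ i, f (-i) = -f i) (l : List ℤ) :
    (grayRev l).map f = grayRev (l.map f) := by
  simp [grayRev, Function.comp_def, hf]

lemma length_G (d : ℕ) : (G d).length = 2 ^ d - 1 := by
  induction d with
  | zero => rfl
  | succ d ih =>
    have := Nat.one_le_two_pow (n := d)
    simp only [G, List.length_append, length_grayRev, ih, List.length_singleton, pow_succ]
    omega

lemma natAbs_mem_Icc_of_mem_G {d : ℕ} {e : ℤ} (he : e ∈ G d) : e.natAbs ∈ Finset.Icc 1 d := by
  induction d generalizing e with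
  | zero => simp [G] at he
  | succ d ih =>
    simp only [G, List.append_assoc, List.mem_append, List.mem_singleton, mem_grayRev] at he
    rcases he with he | rfl | he
    · exact Finset.Icc_subset_Icc_right d.le_succ (ih he)
    · simp [Finset.mem_Icc]
      omega
    · simpa using Finset.Icc_subset_Icc_right d.le_succ (ih he)

lemma take_G {m d : ℕ} (h : m ≤ d) : (G d).take (2 ^ m - 1) = G m := by
  induction d with
  | zero => rw [Nat.le_zero.mp h]; rfl
  | succ d ih =>
    rcases Nat.eq_or_lt_of_le h with rfl | h'
    · rw [List.take_of_length_le (by rw [length_G])]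
    · have hm : m ≤ d := by omega
      have hlen : 2 ^ m - 1 ≤ (G d).length := by
        rw [length_G]
        have := Nat.pow_le_pow_right two_pos hm
        omega
      show ((G d ++ [((d : ℤ) + 1)]) ++ grayRev (G d)).take (2 ^ m - 1) = G m
      rw [List.take_append_of_le_length (by simp; omega),
        List.take_append_of_le_length hlen, ih hm]

lemma map_natAbs_G_reverse (d : ℕ) : ((G d).map Int.natAbs).reverse = (G d).map Int.natAbs := by
  induction d with
  | zero => rfl
  | succ d ih =>
    have : (grayRev (G d)).map Int.natAbs = ((G d).map Int.natAbs).reverse := by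
      simp [grayRev, Function.comp_def]
    simp [G, this, ih]

lemma natAbs_getD_G_reverse {d r : ℕ} (hr : r < 2 ^ d - 1) :
    ((G d).getD (2 ^ d - 2 - r) 0).natAbs = ((G d).getD r 0).natAbs := by
  have h := congrArg (fun l => l.getD r 0) (map_natAbs_G_reverse d)
  rw [List.getD_reverse (l := (G d).map Int.natAbs) r (by simpa [length_G] using hr)] at h
  have hmap (k : ℕ) : ((G d).map Int.natAbs).getD k 0 = ((G d).getD k 0).natAbs :=
    List.getD_map (G d) 0 Int.natAbs
  rw [hmap, hmap, List.length_map, length_G, show 2 ^ d - 1 - 1 - r = 2 ^ d - 2 - r by omega] at h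
  exact h

/-- The first and the last `2^m - 1` edges of `G(d)` use only the axes `1, …, m`: the first ones
form `G(m)`, and the last ones mirror them. -/
lemma natAbs_getD_G_mem_Icc {d m r : ℕ} (hm : m ≤ d) (hr : r < 2 ^ d - 1)
    (h : r + 1 < 2 ^ m ∨ 2 ^ d ≤ r + 2 ^ m) : ((G d).getD r 0).natAbs ∈ Finset.Icc 1 m := by
  have hprefix : ∀ k, k + 1 < 2 ^ m → ((G d).getD k 0).natAbs ∈ Finset.Icc 1 m := by
    intro k hk
    have hkm : k < (G m).length := by rw [length_G]; omega
    have : (G d).getD k 0 = (G m).getD k 0 := by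
      rw [← take_G hm, List.getD_eq_getElem?_getD, List.getD_eq_getElem?_getD,
        List.getElem?_take_of_lt (by omega)]
    rw [this, List.getD_eq_getElem _ _ hkm]
    exact natAbs_mem_Icc_of_mem_G (List.getElem_mem hkm)
  rcases h with h | h
  · exact hprefix r h
  · rw [← natAbs_getD_G_reverse hr]
    exact hprefix _ (by omega)

lemma move_apply_ne {v : Pt} {e : ℤ} {j : ℕ} (h : j ≠ e.natAbs) : move v e j = v j :=
  if_neg h

lemma move_apply_natAbs (v : Pt) (e : ℤ) : move v e e.natAbs = v e.natAbs + e.sign :=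
  if_pos rfl

lemma move_comm (v : Pt) (a b : ℤ) : move (move v a) b = move (move v b) a := by
  funext j
  simp only [move]
  split_ifs <;> ring

lemma move_move_neg (v : Pt) (e : ℤ) : move (move v e) (-e) = v := by
  funext j
  simp only [move, Int.natAbs_neg, Int.sign_neg]
  split_ifs <;> ring

lemma foldl_move_move (a : ℤ) (l : List ℤ) (x : Pt) :
    l.foldl move (move x a) = move (l.foldl move x) a := by
  induction l generalizing x with
  | nil => rfl
  | cons e l ih => simp only [List.foldl_cons, move_comm x a e, ih]

lemma length_pathVertices (x : Pt) (l : List ℤ) : (pathVertices x l).length = l.length + 1 :=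
  List.length_scanl

lemma getD_pathVertices_succ {x : Pt} {l : List ℤ} {r : ℕ} (hr : r < l.length) :
    (pathVertices x l).getD (r + 1) ptZero =
      move ((pathVertices x l).getD r ptZero) (l.getD r 0) := by
  rw [List.getD_eq_getElem _ _ (by rw [length_pathVertices]; omega),
    List.getD_eq_getElem _ _ (by rw [length_pathVertices]; omega), List.getD_eq_getElem _ _ hr]
  exact List.getElem_succ_scanl _

lemma pathVertices_foldl_grayRev (x : Pt) (l : List ℤ) :
    pathVertices (l.foldl move x) (grayRev l) = (pathVertices x l).reverse := by
  induction l using List.reverseRecOn with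
  | nil => rfl
  | append_singleton l e ih =>
    simp only [pathVertices, grayRev] at ih ⊢
    simp [List.scanl_append, move_move_neg, ← ih]

lemma mem_pathVertices_G_succ {f : ℤ → ℤ} (hf : ∀ i, f (-i) = -f i) {d : ℕ} {x u : Pt} :
    u ∈ pathVertices x ((G (d + 1)).map f) ↔
      u ∈ pathVertices x ((G d).map f) ∨
        u ∈ pathVertices (move x (f (d + 1))) ((G d).map f) := by
  have hG : (G (d + 1)).map f = (G d).map f ++ f (d + 1) :: grayRev ((G d).map f) := by
    simp [G, map_grayRev hf]
  rw [hG, pathVertices, List.scanl_append, List.scanl_cons, List.tail_cons, ← foldl_move_move,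
    ← pathVertices, ← pathVertices, pathVertices_foldl_grayRev, List.mem_append, List.mem_reverse]

lemma apply_of_mem_pathVertices_G {f : ℤ → ℤ} (hf : ∀ i, f (-i) = -f i) {d : ℕ}
    (hinj : Set.InjOn (fun t : ℕ => (f t).natAbs) (Set.Icc 1 d)) {x u : Pt}
    (hu : u ∈ pathVertices x ((G d).map f)) (j : ℕ) :
    u j = x j ∨ ∃ t ∈ Set.Icc 1 d, (f t).natAbs = j ∧ u j = x j + (f t).sign := by
  induction d generalizing x u with
  | zero => simp [G, pathVertices] at hu; simp [hu]
  | succ d ih =>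
    have hinj' := hinj.mono (Set.Icc_subset_Icc_right d.le_succ)
    have hmono : Set.Icc 1 d ⊆ Set.Icc 1 (d + 1) := Set.Icc_subset_Icc_right d.le_succ
    rcases (mem_pathVertices_G_succ hf).mp hu with hu | hu
    · rcases ih hinj' hu with h | ⟨t, ht, htj, h⟩
      · exact .inl h
      · exact .inr ⟨t, hmono ht, htj, h⟩
    · by_cases hj : j = (f (d + 1)).natAbs
      · have hcast : ((d + 1 : ℕ) : ℤ) = (d : ℤ) + 1 := Nat.cast_succ d
        subst hj
        rcases ih hinj' hu with h | ⟨t, ht, htj, h⟩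
        · exact .inr ⟨d + 1, ⟨by omega, le_rfl⟩, by rw [hcast], by rw [h, move_apply_natAbs, hcast]⟩
        · have := hinj (hmono ht) (Set.right_mem_Icc.mpr (by omega)) (by simpa using htj)
          exact absurd ht.2 (by omega)
      · rcases ih hinj' hu with h | ⟨t, ht, htj, h⟩
        · exact .inl (by rw [h, move_apply_ne hj])
        · exact .inr ⟨t, hmono ht, htj, by rw [h, move_apply_ne hj]⟩

namespace SignedPerm

variable {d : ℕ} (σ : SignedPerm d)

lemma natAbs_f_natAbs (q : ℤ) : (σ.f q.natAbs).natAbs = (σ.f q).natAbs := by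
  rcases Int.eq_nat_or_neg q with ⟨n, rfl | rfl⟩ <;> simp [σ.neg]

lemma injOn_natAbs_f : Set.InjOn (fun t : ℕ => (σ.f t).natAbs) (Set.Icc 1 d) := by
  intro p hp q hq h
  have hdir : ∀ t : ℕ, t ∈ Set.Icc 1 d → IsDir d t := fun t ht => isDir_iff.mpr (by simpa using ht)
  rcases Int.natAbs_eq_natAbs_iff.mp h with h | h
  · simpa [σ.left_inv _ (hdir p hp), σ.left_inv _ (hdir q hq)] using congrArg σ.inv h
  · have := congrArg σ.inv h
    rw [σ.left_inv _ (hdir p hp), σ.neg_inv, σ.left_inv _ (hdir q hq)] at this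
    omega

def axesImage (m : ℕ) : Finset ℕ := (Finset.Icc 1 m).image fun t : ℕ => (σ.f t).natAbs

lemma card_axesImage_le (m : ℕ) : (σ.axesImage m).card ≤ m :=
  Finset.card_image_le.trans (by simp)

lemma natAbs_f_mem_axesImage {m : ℕ} {q : ℤ} (hq : q.natAbs ∈ Finset.Icc 1 m) :
    (σ.f q).natAbs ∈ σ.axesImage m :=
  Finset.mem_image.mpr ⟨q.natAbs, hq, σ.natAbs_f_natAbs q⟩

end SignedPerm

lemma length_grayPiece (d : ℕ) (σ : SignedPerm d) (v : Pt) : (grayPiece d σ v).length = 2 ^ d := by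
  have := Nat.one_le_two_pow (n := d)
  rw [grayPiece, length_pathVertices, List.length_map, length_G]
  omega

/-- Coordinate `j` is moved only by `σ(t) = ±j`, and `flipped (σ.inv j)` puts the entry corner
on the side of the cube from which that direction points inwards. -/
lemma apply_of_mem_grayPiece {d : ℕ} {σ : SignedPerm d} {v u : Pt} (hu : u ∈ grayPiece d σ v)
    {j : ℕ} (hj : j ∈ Finset.Icc 1 d) : u j = 2 * v j ∨ u j = 2 * v j + 1 := by
  have hj' : 1 ≤ j ∧ j ≤ d := Finset.mem_Icc.mp hj
  rcases apply_of_mem_pathVertices_G σ.neg σ.injOn_natAbs_f hu j with h | ⟨t, ht, htj, h⟩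
  · simp only [h, if_pos hj', flipped]
    split_ifs <;> omega
  · have hdir : IsDir d t := isDir_iff.mpr (by simpa using ht)
    have hjs : (j : ℤ).sign = 1 := Int.sign_eq_one_of_pos (by omega)
    have ht0 : 0 < t := ht.1
    simp only [h, if_pos hj']
    rcases Int.natAbs_eq (σ.f t) with hσ | hσ <;> rw [htj] at hσ
    · have hinv : σ.inv j = t := by rw [← hσ, σ.left_inv _ hdir]
      simp [hinv, hσ, flipped, hjs]
    · have hinv : σ.inv j = -t := by rw [← neg_neg (j : ℤ), σ.neg_inv, ← hσ, σ.left_inv _ hdir]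
      simp [hinv, hσ, flipped, hjs, ht0]

section Flatten

variable {α : Type*} {P : ℕ → List α} {L : ℕ}

lemma length_flatten_map_range (hP : ∀ i, (P i).length = L) (N : ℕ) :
    ((List.range N).map P).flatten.length = N * L := by
  induction N with
  | zero => simp
  | succ N ih => simp [List.range_succ, ih, hP, Nat.succ_mul]

lemma getD_flatten_map_range (hP : ∀ i, (P i).length = L) {N i r : ℕ} (hi : i < N) (hr : r < L)
    (x : α) : ((List.range N).map P).flatten.getD (i * L + r) x = (P i).getD r x := by
  induction N with
  | zero => omega
  | succ N ih =>
    have hlen := length_flatten_map_range hP N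
    simp only [List.range_succ, List.map_append, List.flatten_append, List.map_cons,
      List.map_nil, List.flatten_cons, List.flatten_nil, List.append_nil]
    rcases Nat.lt_or_ge i N with h | h
    · rw [List.getD_append _ _ _ _ (by rw [hlen]; nlinarith), ih h]
    · obtain rfl : i = N := by omega
      rw [List.getD_append_right _ _ _ _ (by omega), hlen, Nat.add_sub_cancel_left]

end Flatten

def edgeAxes (d : ℕ) (c : List Pt) (g : ℕ) : Finset ℕ :=
  axesOfEdge d (c.getD g ptZero) (c.getD (g + 1) ptZero)

lemma axesOfEdge_move {d : ℕ} (v : Pt) {e : ℤ} (he : IsDir d e) :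
    axesOfEdge d v (move v e) = {e.natAbs} := by
  obtain ⟨h0, hle⟩ := he
  have hsgn : e.sign ≠ 0 := fun h => h0 (Int.sign_eq_zero_iff_zero.mp h)
  ext j
  by_cases hj : j = e.natAbs
  · simp [axesOfEdge, move, hj, hsgn, hle]
  · simp [axesOfEdge, move, hj]

section GridCurve

variable {d : ℕ} {c : List Pt}

lemma exists_isDir_getD_succ (hc : c.IsChain (IsEdge d)) {g : ℕ} (hg : g + 1 < c.length) :
    ∃ e, IsDir d e ∧ c.getD (g + 1) ptZero = move (c.getD g ptZero) e := by
  rw [List.getD_eq_getElem _ _ hg, List.getD_eq_getElem _ _ (by omega)]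
  exact List.isChain_iff_getElem.mp hc g hg

lemma edgeAxes_subset_Icc (hc : c.IsChain (IsEdge d)) {g : ℕ} (hg : g + 1 < c.length) :
    edgeAxes d c g ⊆ Finset.Icc 1 d := by
  obtain ⟨e, he, hmove⟩ := exists_isDir_getD_succ hc hg
  rw [edgeAxes, hmove, axesOfEdge_move _ he, Finset.singleton_subset_iff]
  exact isDir_iff.mp he

lemma getD_apply_eq_of_notMem_edgeAxes (hc : c.IsChain (IsEdge d)) {a b j : ℕ} (hab : a ≤ b)
    (hb : b < c.length) (h : ∀ g, a ≤ g → g < b → j ∉ edgeAxes d c g) :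
    c.getD b ptZero j = c.getD a ptZero j := by
  induction b, hab using Nat.le_induction with
  | base => rfl
  | succ b hab ih =>
    obtain ⟨e, he, hmove⟩ := exists_isDir_getD_succ hc hb
    have hj := h b hab (by omega)
    rw [edgeAxes, hmove, axesOfEdge_move _ he, Finset.mem_singleton] at hj
    rw [hmove, move_apply_ne hj, ih (by omega) fun g hg hg' => h g hg (by omega)]

lemma Hyperorthogonal.not_subset (hho : Hyperorthogonal d c) {m s : ℕ} (hm : m ≤ d - 2)
    (hs : s + 2 ^ m + 1 ≤ c.length) {T : Finset ℕ} (hT : T.card ≤ m) {t₀ : ℕ}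
    (hsub : ∀ t < 2 ^ m, t ≠ t₀ → edgeAxes d c (s + t) ⊆ T) : ¬ edgeAxes d c (s + t₀) ⊆ T := by
  intro h₀
  have hcard : ((Finset.range (2 ^ m)).biUnion fun t => edgeAxes d c (s + t)).card = m + 1 :=
    hho m hm s hs
  have : ((Finset.range (2 ^ m)).biUnion fun t => edgeAxes d c (s + t)) ⊆ T :=
    Finset.biUnion_subset.mpr fun t ht => by
      by_cases htt : t = t₀
      · exact htt ▸ h₀
      · exact hsub t (Finset.mem_range.mp ht) htt
  have := Finset.card_le_card this
  omega

end GridCurve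

def grayInflation (d : ℕ) (σ : ℕ → SignedPerm d) (A : List Pt) : List Pt :=
  ((List.range A.length).map fun i => grayPiece d (σ i) (A.getD i ptZero)).flatten

lemma WellFolded.exists_eq_grayInflation {d : ℕ} {c : List Pt} (hc : WellFolded d c)
    (hlen : 2 ≤ c.length) : ∃ σ A, c = grayInflation d σ A ∧ IsGridCurve d c := by
  cases hc with
  | single v => simp at hlen
  | inflate _ h =>
    obtain ⟨σ, hc, hgc⟩ := h
    exact ⟨σ, _, hc, hgc⟩

section GrayInflation

variable {d : ℕ} {σ : ℕ → SignedPerm d} {A : List Pt}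

lemma length_grayInflation : (grayInflation d σ A).length = A.length * 2 ^ d :=
  length_flatten_map_range (fun i => length_grayPiece d (σ i) _) _

lemma getD_grayInflation {i r : ℕ} (hi : i < A.length) (hr : r < 2 ^ d) :
    (grayInflation d σ A).getD (i * 2 ^ d + r) ptZero =
      (grayPiece d (σ i) (A.getD i ptZero)).getD r ptZero :=
  getD_flatten_map_range (fun i => length_grayPiece d (σ i) _) hi hr ptZero

lemma getD_grayInflation_apply {i r j : ℕ} (hi : i < A.length) (hr : r < 2 ^ d)
    (hj : j ∈ Finset.Icc 1 d) :
    (grayInflation d σ A).getD (i * 2 ^ d + r) ptZero j = 2 * A.getD i ptZero j ∨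
      (grayInflation d σ A).getD (i * 2 ^ d + r) ptZero j = 2 * A.getD i ptZero j + 1 := by
  rw [getD_grayInflation hi hr, List.getD_eq_getElem _ _ (by rwa [length_grayPiece])]
  exact apply_of_mem_grayPiece (List.getElem_mem _) hj

lemma edgeAxes_grayInflation {i r : ℕ} (hi : i < A.length) (hr : r + 1 < 2 ^ d) :
    edgeAxes d (grayInflation d σ A) (i * 2 ^ d + r) = {((σ i).f ((G d).getD r 0)).natAbs} := by
  have hrG : r < (G d).length := by rw [length_G]; omega
  have hmem : (G d).getD r 0 ∈ G d := by
    rw [List.getD_eq_getElem _ _ hrG]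
    exact List.getElem_mem hrG
  have hmap : ((G d).map (σ i).f).getD r 0 = (σ i).f ((G d).getD r 0) := by
    simp [List.getD_eq_getElem?_getD, hrG]
  rw [edgeAxes, getD_grayInflation hi (by omega), add_assoc, getD_grayInflation hi hr, grayPiece,
    getD_pathVertices_succ (by simpa using hrG), hmap]
  exact axesOfEdge_move _ ((σ i).maps _ (isDir_iff.mpr (natAbs_mem_Icc_of_mem_G hmem)))

lemma edgeAxes_grayInflation_subset_axesImage {i r n : ℕ} (hi : i < A.length)
    (hr : r + 1 < 2 ^ d) (hn : n ≤ d) (h : r + 1 < 2 ^ n ∨ 2 ^ d ≤ r + 2 ^ n) :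
    edgeAxes d (grayInflation d σ A) (i * 2 ^ d + r) ⊆ (σ i).axesImage n := by
  rw [edgeAxes_grayInflation hi hr, Finset.singleton_subset_iff]
  exact (σ i).natAbs_f_mem_axesImage (natAbs_getD_G_mem_Icc hn (by omega) h)

/-- The last `2^n - 1` edges of piece `i` and the first `2^n - 1` edges of piece `i + 1` use only
`n` axes each, so by hyperorthogonality the edge joining the two pieces uses none of them. -/
lemma notMem_edgeAxes_near_bridge (hc : (grayInflation d σ A).IsChain (IsEdge d))
    (hho : Hyperorthogonal d (grayInflation d σ A)) {n i j g : ℕ} (hn : n ≤ d - 2)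
    (hi : i + 1 < A.length) (hj : j ∈ edgeAxes d (grayInflation d σ A) ((i + 1) * 2 ^ d - 1))
    (hg : (i + 1) * 2 ^ d ≤ g + 2 ^ n) (hg' : g + 1 < (i + 1) * 2 ^ d + 2 ^ n)
    (hgB : g + 1 ≠ (i + 1) * 2 ^ d) : j ∉ edgeAxes d (grayInflation d σ A) g := by
  have hpow : 2 ^ n ≤ 2 ^ d := Nat.pow_le_pow_right two_pos (by omega)
  have hn1 : 1 ≤ 2 ^ n := Nat.one_le_two_pow
  have hB : (i + 1) * 2 ^ d = i * 2 ^ d + 2 ^ d := by ring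
  have hlen : (i + 1) * 2 ^ d + 2 ^ d ≤ (grayInflation d σ A).length := by
    rw [length_grayInflation]
    nlinarith
  obtain ⟨e, he, hmove⟩ := exists_isDir_getD_succ hc (g := (i + 1) * 2 ^ d - 1) (by omega)
  have hbridge : edgeAxes d (grayInflation d σ A) ((i + 1) * 2 ^ d - 1) = {e.natAbs} := by
    rw [edgeAxes, hmove, axesOfEdge_move _ he]
  rw [hbridge, Finset.mem_singleton] at hj
  subst hj
  rcases Nat.lt_or_ge (g + 1) ((i + 1) * 2 ^ d) with hgl | hgr
  · have hsub : ∀ t < 2 ^ n, t ≠ 2 ^ n - 1 →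
        edgeAxes d (grayInflation d σ A) ((i + 1) * 2 ^ d - 2 ^ n + t) ⊆ (σ i).axesImage n := by
      intro t ht htn
      rw [show (i + 1) * 2 ^ d - 2 ^ n + t = i * 2 ^ d + (2 ^ d - 2 ^ n + t) by omega]
      exact edgeAxes_grayInflation_subset_axesImage (by omega) (by omega) (by omega)
        (.inr (by omega))
    have hnot := hho.not_subset hn (by omega) ((σ i).card_axesImage_le n) hsub
    rw [show (i + 1) * 2 ^ d - 2 ^ n + (2 ^ n - 1) = (i + 1) * 2 ^ d - 1 by omega, hbridge,
      Finset.singleton_subset_iff] at hnot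
    rw [show g = i * 2 ^ d + (g - i * 2 ^ d) by omega]
    exact fun h => hnot (edgeAxes_grayInflation_subset_axesImage (by omega) (by omega) (by omega)
      (.inr (by omega)) h)
  · have hsub : ∀ t < 2 ^ n, t ≠ 0 →
        edgeAxes d (grayInflation d σ A) ((i + 1) * 2 ^ d - 1 + t) ⊆ (σ (i + 1)).axesImage n := by
      intro t ht ht0
      rw [show (i + 1) * 2 ^ d - 1 + t = (i + 1) * 2 ^ d + (t - 1) by omega]
      exact edgeAxes_grayInflation_subset_axesImage hi (by omega) (by omega) (.inl (by omega))
    have hnot := hho.not_subset hn (by omega) ((σ (i + 1)).card_axesImage_le n) hsub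
    rw [Nat.add_zero, hbridge, Finset.singleton_subset_iff] at hnot
    rw [show g = (i + 1) * 2 ^ d + (g - (i + 1) * 2 ^ d) by omega]
    exact fun h => hnot (edgeAxes_grayInflation_subset_axesImage hi (by omega) (by omega)
      (.inl (by omega)) h)

lemma getD_apply_eq_near_bridge (hc : (grayInflation d σ A).IsChain (IsEdge d))
    (hho : Hyperorthogonal d (grayInflation d σ A)) {n i j g : ℕ} (hn : n ≤ d - 2)
    (hi : i + 1 < A.length) (hj : j ∈ edgeAxes d (grayInflation d σ A) ((i + 1) * 2 ^ d - 1))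
    (hg : (i + 1) * 2 ^ d ≤ g + 2 ^ n) (hg' : g < (i + 1) * 2 ^ d + 2 ^ n) :
    (g < (i + 1) * 2 ^ d → (grayInflation d σ A).getD g ptZero j =
        (grayInflation d σ A).getD ((i + 1) * 2 ^ d - 1) ptZero j) ∧
      ((i + 1) * 2 ^ d ≤ g → (grayInflation d σ A).getD g ptZero j =
        (grayInflation d σ A).getD ((i + 1) * 2 ^ d) ptZero j) := by
  have hlen : (i + 2) * 2 ^ d ≤ (grayInflation d σ A).length := by
    rw [length_grayInflation]
    exact Nat.mul_le_mul_right _ hi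
  have hB : (i + 2) * 2 ^ d = (i + 1) * 2 ^ d + 2 ^ d := by ring
  have hpow : 2 ^ n ≤ 2 ^ d := Nat.pow_le_pow_right two_pos (by omega)
  refine ⟨fun h => ?_, fun h => ?_⟩
  · exact (getD_apply_eq_of_notMem_edgeAxes hc (by omega) (by omega) fun g' h1 h2 =>
      notMem_edgeAxes_near_bridge hc hho hn hi hj (by omega) (by omega) (by omega)).symm
  · exact getD_apply_eq_of_notMem_edgeAxes hc h (by omega) fun g' h1 h2 =>
      notMem_edgeAxes_near_bridge hc hho hn hi hj (by omega) (by omega) (by omega)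

lemma exists_apply_near_bridge_of_mem (hc : (grayInflation d σ A).IsChain (IsEdge d))
    (hho : Hyperorthogonal d (grayInflation d σ A)) {n i j : ℕ} (hn : n ≤ d - 2)
    (hi : i + 1 < A.length) (hj : j ∈ edgeAxes d (grayInflation d σ A) ((i + 1) * 2 ^ d - 1)) :
    ∃ b : ℤ, ∀ g, (i + 1) * 2 ^ d ≤ g + 2 ^ n → g < (i + 1) * 2 ^ d + 2 ^ n →
      (grayInflation d σ A).getD g ptZero j = b ∨
        (grayInflation d σ A).getD g ptZero j = b + 1 := by
  set c := grayInflation d σ A with hc_def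
  have hlen : (i + 1) * 2 ^ d < c.length := by
    rw [length_grayInflation]
    exact Nat.mul_lt_mul_of_pos_right hi (Nat.two_pow_pos d)
  have hB : 1 ≤ (i + 1) * 2 ^ d := Nat.mul_pos i.succ_pos (Nat.two_pow_pos d)
  obtain ⟨e, he, hmove⟩ := exists_isDir_getD_succ hc (g := (i + 1) * 2 ^ d - 1) (by omega)
  have hje : j = e.natAbs := by
    rwa [edgeAxes, hmove, axesOfEdge_move _ he, Finset.mem_singleton] at hj
  rw [show (i + 1) * 2 ^ d - 1 + 1 = (i + 1) * 2 ^ d by omega] at hmove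
  have hstep : c.getD ((i + 1) * 2 ^ d) ptZero j =
      c.getD ((i + 1) * 2 ^ d - 1) ptZero j + e.sign := by
    rw [hmove, hje, move_apply_natAbs]
  have hsign : e.sign = 1 ∨ e.sign = -1 := by
    rcases Int.sign_trichotomy e with h | h | h
    · exact .inl h
    · exact absurd (Int.sign_eq_zero_iff_zero.mp h) he.1
    · exact .inr h
  refine ⟨min (c.getD ((i + 1) * 2 ^ d - 1) ptZero j) (c.getD ((i + 1) * 2 ^ d) ptZero j),
    fun g h1 h2 => ?_⟩
  have hside := getD_apply_eq_near_bridge hc hho hn hi hj h1 h2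
  rw [← hc_def] at hside
  rcases Nat.lt_or_ge g ((i + 1) * 2 ^ d) with h | h
  · rw [hside.1 h]
    omega
  · rw [hside.2 h]
    omega

lemma getD_apply_near_bridge_of_notMem (hc : (grayInflation d σ A).IsChain (IsEdge d))
    {i j g : ℕ} (hi : i + 1 < A.length) (hj : j ∈ Finset.Icc 1 d)
    (hjB : j ∉ edgeAxes d (grayInflation d σ A) ((i + 1) * 2 ^ d - 1))
    (hg : i * 2 ^ d ≤ g) (hg' : g < (i + 2) * 2 ^ d) :
    (grayInflation d σ A).getD g ptZero j = 2 * A.getD i ptZero j ∨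
      (grayInflation d σ A).getD g ptZero j = 2 * A.getD i ptZero j + 1 := by
  set c := grayInflation d σ A with hc_def
  have hB : (i + 1) * 2 ^ d = i * 2 ^ d + 2 ^ d := by ring
  have hB' : (i + 2) * 2 ^ d = i * 2 ^ d + 2 ^ d + 2 ^ d := by ring
  have hd1 : 1 ≤ 2 ^ d := Nat.one_le_two_pow
  have hlen : (i + 2) * 2 ^ d ≤ c.length := by
    rw [length_grayInflation]
    exact Nat.mul_le_mul_right _ hi
  have hstep : c.getD ((i + 1) * 2 ^ d) ptZero j = c.getD ((i + 1) * 2 ^ d - 1) ptZero j :=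
    getD_apply_eq_of_notMem_edgeAxes hc (by omega) (by omega) fun g h1 h2 => by
      rwa [show g = (i + 1) * 2 ^ d - 1 by omega]
  have hlast :=
    getD_grayInflation_apply (σ := σ) (A := A) (i := i) (r := 2 ^ d - 1) (by omega) (by omega) hj
  have hfirst := getD_grayInflation_apply (σ := σ) (i := i + 1) (r := 0) hi (by omega) hj
  rw [← hc_def, show i * 2 ^ d + (2 ^ d - 1) = (i + 1) * 2 ^ d - 1 by omega] at hlast
  rw [← hc_def, Nat.add_zero] at hfirst
  rcases Nat.lt_or_ge g ((i + 1) * 2 ^ d) with h | h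
  · rw [show g = i * 2 ^ d + (g - i * 2 ^ d) by omega]
    exact getD_grayInflation_apply (by omega) (by omega) hj
  · have :=
      getD_grayInflation_apply (σ := σ) (i := i + 1) (r := g - (i + 1) * 2 ^ d) hi (by omega) hj
    rw [← hc_def, show (i + 1) * 2 ^ d + (g - (i + 1) * 2 ^ d) = g by omega] at this
    omega

lemma exists_apply_near_bridge (hc : (grayInflation d σ A).IsChain (IsEdge d))
    (hho : Hyperorthogonal d (grayInflation d σ A)) {n i j : ℕ} (hn : n ≤ d - 2)
    (hi : i + 1 < A.length) (hj : j ∈ Finset.Icc 1 d) :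
    ∃ b : ℤ, ∀ g, (i + 1) * 2 ^ d ≤ g + 2 ^ n → g < (i + 1) * 2 ^ d + 2 ^ n →
      (grayInflation d σ A).getD g ptZero j = b ∨
        (grayInflation d σ A).getD g ptZero j = b + 1 := by
  by_cases hjB : j ∈ edgeAxes d (grayInflation d σ A) ((i + 1) * 2 ^ d - 1)
  · exact exists_apply_near_bridge_of_mem hc hho hn hi hjB
  · have hpow : 2 ^ n ≤ 2 ^ d := Nat.pow_le_pow_right two_pos (by omega)
    have hB : (i + 2) * 2 ^ d = (i + 1) * 2 ^ d + 2 ^ d := by ring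
    have hB' : (i + 1) * 2 ^ d = i * 2 ^ d + 2 ^ d := by ring
    exact ⟨_, fun g h1 h2 =>
      getD_apply_near_bridge_of_notMem hc hi hj hjB (by omega) (by omega)⟩

lemma exists_apply_window (hc : (grayInflation d σ A).IsChain (IsEdge d))
    (hho : Hyperorthogonal d (grayInflation d σ A)) {n s j : ℕ} (hn : n ≤ d - 2)
    (hs : s + 2 ^ n + 1 ≤ (grayInflation d σ A).length) (hj : j ∈ Finset.Icc 1 d) :
    ∃ b : ℤ, ∀ t ≤ 2 ^ n, (grayInflation d σ A).getD (s + t) ptZero j = b ∨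
      (grayInflation d σ A).getD (s + t) ptZero j = b + 1 := by
  have hpow : 2 ^ n ≤ 2 ^ d := Nat.pow_le_pow_right two_pos (by omega)
  have hn1 : 1 ≤ 2 ^ n := Nat.one_le_two_pow
  have hs' := Nat.div_add_mod' s (2 ^ d)
  have hr := Nat.mod_lt s (Nat.two_pow_pos d)
  rw [length_grayInflation] at hs
  rcases Nat.lt_or_ge (s % 2 ^ d + 2 ^ n) (2 ^ d) with h | h
  · have hi : s / 2 ^ d < A.length := Nat.lt_of_mul_lt_mul_right (a := 2 ^ d) (by omega)
    refine ⟨2 * A.getD (s / 2 ^ d) ptZero j, fun t ht => ?_⟩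
    rw [show s + t = s / 2 ^ d * 2 ^ d + (s % 2 ^ d + t) by omega]
    exact getD_grayInflation_apply hi (by omega) hj
  · have hB : (s / 2 ^ d + 1) * 2 ^ d = s / 2 ^ d * 2 ^ d + 2 ^ d := by ring
    have hi : s / 2 ^ d + 1 < A.length := Nat.lt_of_mul_lt_mul_right (a := 2 ^ d) (by omega)
    obtain ⟨b, hb⟩ := exists_apply_near_bridge hc hho hn hi hj
    exact ⟨b, fun t ht => hb (s + t) (by omega) (by omega)⟩

end GrayInflation

theorem window_in_unit_cube_general (d n : ℕ) (hn : n ≤ d - 2)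
    (c : List Pt) (hwf : WellFolded d c) (hho : Hyperorthogonal d c)
    (s : ℕ) (hs : s + 2 ^ n + 1 ≤ c.length) :
    ∃ S : Finset ℕ, S.card = n + 1 ∧ (∀ a ∈ S, 1 ≤ a ∧ a ≤ d) ∧
      ∃ base : Pt, ∀ t, t ≤ 2 ^ n → ∀ j,
        (j ∈ S → (c.getD (s + t) ptZero) j = base j ∨
          (c.getD (s + t) ptZero) j = base j + 1) ∧
        (j ∉ S → (c.getD (s + t) ptZero) j = base j) := by
  obtain ⟨σ, A, rfl, hgc⟩ :=
    hwf.exists_eq_grayInflation (by have := Nat.one_le_two_pow (n := n); omega)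
  set S := (Finset.range (2 ^ n)).biUnion fun t => edgeAxes d (grayInflation d σ A) (s + t)
  have hS : ∀ a ∈ S, a ∈ Finset.Icc 1 d := by
    simp only [S, Finset.mem_biUnion, Finset.mem_range]
    rintro a ⟨t, ht, ha⟩
    exact edgeAxes_subset_Icc hgc.2 (by omega) ha
  choose b hb using fun a (ha : a ∈ S) => exists_apply_window hgc.2 hho hn hs (hS a ha)
  refine ⟨S, hho n hn s hs, fun a ha => Finset.mem_Icc.mp (hS a ha),
    fun j => if hj : j ∈ S then b j hj else (grayInflation d σ A).getD s ptZero j,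
    fun t ht j => ⟨fun hj => ?_, fun hj => ?_⟩⟩
  · simpa only [dif_pos hj] using hb j hj t ht
  · simp only [dif_neg hj]
    refine getD_apply_eq_of_notMem_edgeAxes hgc.2 (by omega) (by omega) fun g hg hg' hjg => hj ?_
    exact Finset.mem_biUnion.mpr
      ⟨g - s, Finset.mem_range.mpr (by omega), by rwa [Nat.add_sub_cancel' hg]⟩

/-- every `2^n` consecutive edges of a well-folded hyperorthogonal
curve (for `n ∈ {0,…,d−2}`) lie inside an `(n+1)`-dimensional unit cube: an
axis-aligned box with side length 1 in exactly `n+1` coordinates (a set `S` of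
axes) and side length 0 in the remaining coordinates. -/
theorem window_in_unit_cube (d n : ℕ) (hd : 2 ≤ d) (hn : n ≤ d - 2)
    (c : List Pt) (hwf : WellFolded d c) (hho : Hyperorthogonal d c)
    (s : ℕ) (hs : s + 2 ^ n + 1 ≤ c.length) :
    ∃ S : Finset ℕ, S.card = n + 1 ∧ (∀ a ∈ S, 1 ≤ a ∧ a ≤ d) ∧
      ∃ base : Pt, ∀ t, t ≤ 2 ^ n → ∀ j,
        (j ∈ S → (c.getD (s + t) ptZero) j = base j ∨
          (c.getD (s + t) ptZero) j = base j + 1) ∧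
        (j ∉ S → (c.getD (s + t) ptZero) j = base j) :=
  window_in_unit_cube_general d n hn c hwf hho s hs
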